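/- arXiv:2403.16284 — 10 statements merged into one kernel-verified Lean document; each statement's English description precedes it below -/
import Mathlib

section
/- Let k_1, k_2 ≥ 1 be natural numbers. In ℤ_{k_1k_2}, the sets B_1 = {0, 1, 2, …, k_1−1} and B_2 = {0, k_1, 2k_1, …, k_1(k_2−1)} satisfy Δ(B_1,B_2) = ℤ_{k_1k_2} and Δ(B_2,B_1) = ℤ_{k_1k_2} as multisets (each element of ℤ_{k_1k_2} occurs exactly once in each difference multiset); in particular {B_1, B_2} forms a non-disjoint (k_1k_2, 2, k_1, k_2)-GPSEDF in ℤ_{k_1k_2}. -/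
/-!
A residue modulo `k₁k₂` has exactly one mixed-radix representative `i + j k₁` with `i < k₁`,
`j < k₂`. Hence `(i, j k₁) ↦ i - j k₁` is injective on `B₁ × B₂`, and as `|B₁| |B₂| = k₁k₂`
the difference multiset `Δ(B₁, B₂)` is the whole group, each element once. Finally
`Δ(B₂, B₁) = -Δ(B₁, B₂)`, and negation permutes the group.
-/

/-- The external difference multiset `Δ(A,B) = {a - b : a ∈ A, b ∈ B}` (with multiplicity). -/
def extDiff {G : Type*} [AddGroup G] (A B : Finset G) : Multiset G :=
  A.val.bind fun a => B.val.map fun b => a - b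

open Finset

section
variable {G : Type*} [AddGroup G]

theorem extDiff_eq_map_product (A B : Finset G) :
    extDiff A B = (A ×ˢ B).val.map fun p => p.1 - p.2 := by
  rw [extDiff, product_val]
  simp only [SProd.sprod, Multiset.product, Multiset.map_bind, Multiset.map_map, Function.comp_def]

theorem extDiff_swap (A B : Finset G) : extDiff B A = (extDiff A B).map Neg.neg := by
  simp only [extDiff, Multiset.map_bind, Multiset.map_map, Function.comp_def, neg_sub]
  exact Multiset.bind_map_comm _ _

theorem extDiff_eq_univ_val [Fintype G] {A B : Finset G}
    (hinj : Set.InjOn (fun p : G × G => p.1 - p.2) (A ×ˢ B))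
    (hcard : #A * #B = Fintype.card G) : extDiff A B = univ.val := by
  have hnodup : (extDiff A B).Nodup := by
    rw [extDiff_eq_map_product]
    exact (A ×ˢ B).nodup.map_on fun x hx y hy => hinj (by simpa using hx) (by simpa using hy)
  refine congrArg Finset.val (eq_univ_of_card ⟨_, hnodup⟩ ?_)
  rw [card_mk, extDiff_eq_map_product, Multiset.card_map, ← card_def, card_product, hcard]

theorem extDiff_swap_eq_univ_val [Fintype G] {A B : Finset G}
    (h : extDiff A B = univ.val) : extDiff B A = univ.val := by
  rw [extDiff_swap, h]
  exact congrArg Finset.val (map_univ_equiv (Equiv.neg G))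

end

theorem Nat.add_mul_lt_mul {m n i j : ℕ} (hi : i < m) (hj : j < n) : i + j * m < m * n := by
  nlinarith

theorem Nat.eq_and_eq_of_add_mul_eq_add_mul {m i i' j j' : ℕ} (hi : i < m) (hi' : i' < m)
    (h : i + j * m = i' + j' * m) : i = i' ∧ j = j' := by
  have hii' : i = i' := by
    simpa [Nat.add_mul_mod_self_right, Nat.mod_eq_of_lt hi, Nat.mod_eq_of_lt hi'] using
      congrArg (· % m) h
  subst hii'
  exact ⟨rfl, Nat.eq_of_mul_eq_mul_right (by omega) (Nat.add_left_cancel h)⟩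

theorem ZMod.eq_and_eq_of_natCast_add_mul_eq {m n i i' j j' : ℕ} (hi : i < m) (hi' : i' < m)
    (hj : j < n) (hj' : j' < n) (h : ((i + j * m : ℕ) : ZMod (m * n)) = ((i' + j' * m : ℕ))) :
    i = i' ∧ j = j' := by
  rw [ZMod.natCast_eq_natCast_iff', Nat.mod_eq_of_lt (Nat.add_mul_lt_mul hi hj),
    Nat.mod_eq_of_lt (Nat.add_mul_lt_mul hi' hj')] at h
  exact Nat.eq_and_eq_of_add_mul_eq_add_mul hi hi' h

section
variable {k₁ k₂ : ℕ}

theorem card_image_natCast_range (h₂ : 0 < k₂) :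
    ((range k₁).image fun i : ℕ => (i : ZMod (k₁ * k₂))).card = k₁ := by
  rw [card_image_of_injOn, card_range]
  intro i hi i' hi' h
  exact (ZMod.eq_and_eq_of_natCast_add_mul_eq (j := 0) (j' := 0) (by simpa using hi)
    (by simpa using hi') h₂ h₂ (by simpa using h)).1

theorem card_image_natCast_mul_range (h₁ : 0 < k₁) :
    ((range k₂).image fun j : ℕ => ((j * k₁ : ℕ) : ZMod (k₁ * k₂))).card = k₂ := by
  rw [card_image_of_injOn, card_range]
  intro j hj j' hj' h
  exact (ZMod.eq_and_eq_of_natCast_add_mul_eq (i := 0) (i' := 0) h₁ h₁ (by simpa using hj)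
    (by simpa using hj') (by simpa using h)).2

theorem injOn_sub_image_natCast_range_product :
    Set.InjOn (fun p : ZMod (k₁ * k₂) × ZMod (k₁ * k₂) => p.1 - p.2)
      ((range k₁).image (fun i : ℕ => (i : ZMod (k₁ * k₂))) ×ˢ
        (range k₂).image fun j : ℕ => ((j * k₁ : ℕ) : ZMod (k₁ * k₂))) := by
  rintro ⟨a, b⟩ hp ⟨a', b'⟩ hp' h
  simp only [Set.mem_prod, coe_image, coe_range, Set.mem_image, Set.mem_Iio] at hp hp'
  obtain ⟨⟨i, hi, rfl⟩, ⟨j, hj, rfl⟩⟩ := hp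
  obtain ⟨⟨i', hi', rfl⟩, ⟨j', hj', rfl⟩⟩ := hp'
  have h' : ((i + j' * k₁ : ℕ) : ZMod (k₁ * k₂)) = ((i' + j * k₁ : ℕ)) := by
    push_cast at h ⊢
    linear_combination h
  obtain ⟨rfl, rfl⟩ := ZMod.eq_and_eq_of_natCast_add_mul_eq hi hi' hj' hj h'
  rfl

end

/-- In `ℤ_{k₁k₂}`, the sets `B₁ = {0,…,k₁-1}` and `B₂ = {0,k₁,…,k₁(k₂-1)}`
satisfy `Δ(B₁,B₂) = Δ(B₂,B₁) = ℤ_{k₁k₂}` (each element occurring exactly once), so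
`{B₁, B₂}` is a non-disjoint `(k₁k₂, 2, k₁, k₂)`-GPSEDF. -/
theorem stmt_1 (k₁ k₂ : ℕ) (h₁ : 1 ≤ k₁) (h₂ : 1 ≤ k₂) :
    haveI : NeZero (k₁ * k₂) := ⟨(Nat.mul_pos h₁ h₂).ne'⟩
    let B₁ : Finset (ZMod (k₁ * k₂)) :=
      (Finset.range k₁).image (fun i : ℕ => (i : ZMod (k₁ * k₂)))
    let B₂ : Finset (ZMod (k₁ * k₂)) :=
      (Finset.range k₂).image (fun i : ℕ => ((i * k₁ : ℕ) : ZMod (k₁ * k₂)))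
    B₁.card = k₁ ∧ B₂.card = k₂ ∧
      extDiff B₁ B₂ = (Finset.univ : Finset (ZMod (k₁ * k₂))).val ∧
      extDiff B₂ B₁ = (Finset.univ : Finset (ZMod (k₁ * k₂))).val := by
  have : NeZero (k₁ * k₂) := ⟨(Nat.mul_pos h₁ h₂).ne'⟩
  intro B₁ B₂
  have hcard₁ : B₁.card = k₁ := card_image_natCast_range h₂
  have hcard₂ : B₂.card = k₂ := card_image_natCast_mul_range h₁
  have hΔ : extDiff B₁ B₂ = univ.val :=
    extDiff_eq_univ_val injOn_sub_image_natCast_range_product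
      (by rw [hcard₁, hcard₂, ZMod.card])
  exact ⟨hcard₁, hcard₂, hΔ, extDiff_swap_eq_univ_val hΔ⟩
end

section
/- Let G be an abelian group of order v, let m ≥ 3 and k ≥ 1. Then there does not exist a classical (v,m,k,λ)-PSEDF in G, i.e. there is no family of m pairwise disjoint k-subsets A_1, …, A_m of G such that Δ(A_i,A_j) = λ(G∖{0}) as multisets for all i ≠ j. -/
open AddMonoidAlgebra

namespace AddMonoidAlgebra

section AddMonoid

variable {G : Type*} [AddMonoid G]

noncomputable def ofMultiset (s : Multiset G) : ℤ[G] := (s.map fun g => single g 1).sum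

@[simp]
lemma ofMultiset_zero : ofMultiset (0 : Multiset G) = 0 := rfl

@[simp]
lemma ofMultiset_cons (g : G) (s : Multiset G) :
    ofMultiset (g ::ₘ s) = single g 1 + ofMultiset s := by
  simp [ofMultiset]

lemma ofMultiset_nsmul (n : ℕ) (s : Multiset G) : ofMultiset (n • s) = n • ofMultiset s := by
  simp [ofMultiset, Multiset.map_nsmul, Multiset.sum_nsmul]

lemma coeff_ofMultiset [DecidableEq G] (s : Multiset G) (g : G) :
    (ofMultiset s).coeff g = s.count g := by
  induction s using Multiset.induction_on with
  | empty => simp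
  | cons a s ih => simp [ih, Finsupp.single_apply, Multiset.count_cons, add_comm, eq_comm]

end AddMonoid

section AddGroup

variable {G : Type*} [AddGroup G]

lemma ofMultiset_extDiff (A B : Finset G) :
    ofMultiset (extDiff A B) = ofMultiset A.val * ofMultiset (B.val.map Neg.neg) := by
  simp only [ofMultiset, extDiff, Multiset.map_bind, Multiset.sum_bind, Multiset.map_map,
    Function.comp_def]
  change ∑ a ∈ A, ∑ b ∈ B, single (a - b) 1 = (∑ a ∈ A, single a 1) * ∑ b ∈ B, single (-b) 1
  simp only [Finset.sum_mul_sum, single_mul_single, sub_eq_add_neg, mul_one]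

lemma ofMultiset_univ_mul_single [Fintype G] (g : G) :
    ofMultiset (Finset.univ : Finset G).val * single g 1 = ofMultiset Finset.univ.val := by
  change (∑ h, single h 1) * single g 1 = ∑ h, single h 1
  simp only [Finset.sum_mul, single_mul_single, mul_one]
  exact Fintype.sum_equiv (Equiv.addRight g) _ _ fun _ => rfl

lemma ofMultiset_univ_mul [Fintype G] (s : Multiset G) :
    ofMultiset (Finset.univ : Finset G).val * ofMultiset s
      = s.card • ofMultiset Finset.univ.val := by
  induction s using Multiset.induction_on with
  | empty => simp
  | cons g s ih =>
    rw [ofMultiset_cons, mul_add, ih, ofMultiset_univ_mul_single, Multiset.card_cons, succ_nsmul']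

lemma ofMultiset_univ_erase_zero [Fintype G] [DecidableEq G] :
    ofMultiset ((Finset.univ : Finset G).erase 0).val = ofMultiset Finset.univ.val - 1 := by
  rw [← Finset.insert_erase (Finset.mem_univ (0 : G)),
    Finset.insert_val_of_notMem (Finset.notMem_erase 0 _), ofMultiset_cons,
    Finset.erase_insert_eq_erase, Finset.erase_idem, one_def, add_sub_cancel_left]

lemma coeff_ofMultiset_univ [Fintype G] [DecidableEq G] (g : G) :
    (ofMultiset (Finset.univ : Finset G).val).coeff g = 1 := by
  rw [coeff_ofMultiset, Multiset.count_eq_one_of_mem Finset.univ.nodup (Finset.mem_univ g),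
    Nat.cast_one]

lemma coeff_zero_ofMultiset_extDiff_self [DecidableEq G] (A : Finset G) :
    (ofMultiset (extDiff A A)).coeff 0 = A.card := by
  have hcount : ∀ a ∈ A.val, (A.val.map fun b => a - b).count 0 = 1 := fun a ha => by
    rw [← sub_self a, Multiset.count_map_eq_count' _ _ sub_right_injective,
      Multiset.count_eq_one_of_mem A.nodup ha]
  simp [coeff_ofMultiset, extDiff, Multiset.count_bind, Multiset.map_congr rfl hcount]

end AddGroup

lemma ofMultiset_extDiff_cycle {G : Type*} [AddCommGroup G] (A B C : Finset G) :
    ofMultiset (extDiff A B) * ofMultiset (extDiff B A) * ofMultiset (extDiff C C) =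
      ofMultiset (extDiff A B) * ofMultiset (extDiff B C) * ofMultiset (extDiff C A) := by
  simp only [ofMultiset_extDiff]
  ring

end AddMonoidAlgebra

lemma card_extDiff {G : Type*} [AddGroup G] (A B : Finset G) :
    (extDiff A B).card = A.card * B.card := by
  simp [extDiff, Multiset.card_bind]

theorem extDiff_cycle_identity {G : Type*} [AddCommGroup G] [Fintype G] [DecidableEq G]
    {A B C : Finset G} {lam : ℕ}
    (hAB : extDiff A B = lam • ((Finset.univ : Finset G).erase 0).val)
    (hBA : extDiff B A = lam • ((Finset.univ : Finset G).erase 0).val)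
    (hBC : extDiff B C = lam • ((Finset.univ : Finset G).erase 0).val)
    (hCA : extDiff C A = lam • ((Finset.univ : Finset G).erase 0).val) :
    (lam : ℤ) ^ 2 * ((Fintype.card G - 2) * C.card ^ 2 + C.card)
      = lam ^ 3 * ((Fintype.card G - 1) * (Fintype.card G - 2)) := by
  set v := Fintype.card G
  set c := C.card
  set N := ofMultiset (Finset.univ : Finset G).val
  set E := ofMultiset (extDiff C C)
  have hdiff {X Y : Finset G} (h : extDiff X Y = lam • ((Finset.univ : Finset G).erase 0).val) :
      ofMultiset (extDiff X Y) = lam * (N - 1) := by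
    rw [h, ofMultiset_nsmul, ofMultiset_univ_erase_zero, nsmul_eq_mul]
  have hNN : N * N = v * N := by
    rw [ofMultiset_univ_mul, Finset.card_val, Finset.card_univ, nsmul_eq_mul]
  have hNE : N * E = (c * c : ℕ) * N := by
    rw [ofMultiset_univ_mul, card_extDiff, nsmul_eq_mul]
  have hcycle := ofMultiset_extDiff_cycle A B C
  rw [hdiff hAB, hdiff hBA, hdiff hBC, hdiff hCA] at hcycle
  -- the cycle identity expanded by `N² = vN` and `N E = c²N`, with all coefficients moved into `ℕ`
  have hexp : ((lam ^ 2 * v * c ^ 2 + 3 * lam ^ 3 * v : ℕ) : ℤ[G]) * N + (lam ^ 2 : ℕ) * E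
      + (lam ^ 3 : ℕ) = ((2 * lam ^ 2 * c ^ 2 + lam ^ 3 * v ^ 2 + 3 * lam ^ 3 : ℕ) : ℤ[G]) * N := by
    linear_combination (norm := (push_cast; ring)) hcycle - (lam ^ 2 * N - 2 * lam ^ 2) * hNE
      + (lam ^ 3 * N + lam ^ 3 * (v - 3) - lam ^ 2 * c ^ 2) * hNN
  have hcoeff := congrArg (fun x => x.coeff 0) hexp
  simp only [natCast_def, coeff_add, Finsupp.coe_add, Pi.add_apply, coeff_single_zero_mul,
    coeff_single, Finsupp.single_eq_same, N, E, coeff_ofMultiset_univ,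
    coeff_zero_ofMultiset_extDiff_self] at hcoeff
  push_cast at hcoeff
  linear_combination hcoeff

theorem stmt_2_general {G : Type*} [AddCommGroup G] [Fintype G] [DecidableEq G]
    (m k : ℕ) (hm : 3 ≤ m) (hk : 1 ≤ k) :
    ¬ ∃ (lam : ℕ) (A : Fin m → Finset G),
        (∀ i j, i ≠ j → Disjoint (A i) (A j)) ∧
        (∀ i, (A i).card = k) ∧
        (∀ i j, i ≠ j →
          extDiff (A i) (A j) = lam • ((Finset.univ : Finset G).erase 0).val) := by
  rintro ⟨lam, A, -, hcard, hdiff⟩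
  have hdiff3 (a b : Fin 3) (hab : a ≠ b := by decide) :=
    hdiff (Fin.castLE hm a) (Fin.castLE hm b) ((Fin.castLE_injective hm).ne hab)
  have hcycle := extDiff_cycle_identity (hdiff3 0 1) (hdiff3 1 0) (hdiff3 1 2) (hdiff3 2 0)
  have hk2 : (k : ℤ) ^ 2 = lam * (Fintype.card G - 1) := by
    have h := congrArg Multiset.card (hdiff3 0 1)
    rw [card_extDiff, hcard, hcard, Multiset.card_nsmul, Finset.card_val,
      Finset.card_erase_of_mem (Finset.mem_univ 0), Finset.card_univ] at h
    rw [← Nat.cast_pred Fintype.card_pos]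
    exact_mod_cast (sq k).trans h
  rw [hcard] at hcycle
  have hlam : (lam : ℤ) ^ 2 * k = 0 := by
    linear_combination hcycle - (lam : ℤ) ^ 2 * (Fintype.card G - 2) * hk2
  have hlam0 : lam = 0 := by
    simpa [show k ≠ 0 by omega] using hlam
  simp [hlam0] at hk2
  omega

/-- In an abelian group of order `v` there is no classical
`(v,m,k,λ)`-PSEDF with `m ≥ 3` (and `k ≥ 1`): there is no family of `m` pairwise disjoint
`k`-subsets `A₁,…,A_m` with `Δ(Aᵢ,Aⱼ) = λ(G∖{0})` for all `i ≠ j`. -/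
theorem stmt_2 {G : Type*} [AddCommGroup G] [Fintype G] [DecidableEq G]
    (v m k : ℕ) (hv : Fintype.card G = v) (hm : 3 ≤ m) (hk : 1 ≤ k) :
    ¬ ∃ (lam : ℕ) (A : Fin m → Finset G),
        (∀ i j, i ≠ j → Disjoint (A i) (A j)) ∧
        (∀ i, (A i).card = k) ∧
        (∀ i j, i ≠ j →
          extDiff (A i) (A j) = lam • ((Finset.univ : Finset G).erase 0).val) :=
  stmt_2_general m k hm hk
end

section
/- Let A = {A_1, …, A_m} be a non-disjoint (v,m,k_1,…,k_m)-GPSEDF in a finite group G of order v, written additively (G is not assumed abelian). Then the family of complements {G∖A_1, G∖A_2, …, G∖A_m} is a non-disjoint (v, m, v−k_1, v−k_2, …, v−k_m)-GPSEDF in G. -/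
/-- `A₁,…,A_m` is a non-disjoint `(|G|,m,k₁,…,k_m)`-GPSEDF in `G`: `|Aᵢ| = kᵢ` and for all
`i ≠ j`, `Δ(Aᵢ,Aⱼ) = λᵢⱼ G` as multisets, where `λᵢⱼ = kᵢkⱼ/|G|`. -/
def IsNDGPSEDF {G : Type*} [AddGroup G] [Fintype G] {m : ℕ}
    (A : Fin m → Finset G) (k : Fin m → ℕ) : Prop :=
  (∀ i, (A i).card = k i) ∧
  ∀ i j, i ≠ j → ∃ lam : ℕ, lam * Fintype.card G = k i * k j ∧
    extDiff (A i) (A j) = lam • (Finset.univ : Finset G).val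

/-!
Write `U` for `G` as a multiset and `v = |G|`. Since `b ↦ a - b` and `a ↦ a - b` are bijections
of `G`, `Δ(A, G) = |A| U` and `Δ(G, B) = |B| U`. As `Δ` is additive in each argument and
`A + Aᶜ = U`, the multiplicity of any `g` in `Δ(Aᶜ, Bᶜ)` is
`(v - |B|) - (|A| - λ) = v + λ - |A| - |B|`, and `λ v = |A| |B|` turns into
`(v + λ - |A| - |B|) v = (v - |A|) (v - |B|)`.
-/

theorem Multiset.bind_const {α β : Type*} (s : Multiset α) (t : Multiset β) :
    s.bind (fun _ => t) = Multiset.card s • t := by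
  simp only [Multiset.bind, Multiset.join, Multiset.map_const', Multiset.sum_replicate]

theorem Finset.val_add_val_compl {α : Type*} [Fintype α] [DecidableEq α] (A : Finset α) :
    A.val + Aᶜ.val = (Finset.univ : Finset α).val := by
  rw [Multiset.add_eq_union_iff_disjoint.mpr (Finset.disjoint_val.mpr disjoint_compl_right),
    ← Finset.union_val, Finset.union_compl]

theorem Multiset.eq_nsmul_univ_iff {α : Type*} [Fintype α] [DecidableEq α] (s : Multiset α)
    (c : ℕ) : s = c • (Finset.univ : Finset α).val ↔ ∀ a, s.count a = c := by
  simp only [Multiset.ext, Multiset.count_nsmul, Multiset.count_univ, mul_one]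

namespace extDiff

variable {G : Type*} [AddGroup G] [Fintype G]

theorem univ_right (A : Finset G) :
    extDiff A Finset.univ = A.card • (Finset.univ : Finset G).val := by
  have hmap (a : G) : Finset.univ.val.map (fun b => a - b) = (Finset.univ : Finset G).val :=
    congrArg Finset.val (Finset.map_univ_equiv (Equiv.subLeft a))
  simp only [extDiff, hmap, Multiset.bind_const, Finset.card_def]

theorem univ_left (B : Finset G) :
    extDiff Finset.univ B = B.card • (Finset.univ : Finset G).val := by
  have hmap (b : G) : Finset.univ.val.map (fun a => a - b) = (Finset.univ : Finset G).val :=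
    congrArg Finset.val (Finset.map_univ_equiv (Equiv.subRight b))
  simp only [extDiff, Multiset.bind_map_comm, hmap, Multiset.bind_const, Finset.card_def]

variable [DecidableEq G]

theorem add_compl_left (A B : Finset G) :
    extDiff A B + extDiff Aᶜ B = extDiff Finset.univ B := by
  simp only [extDiff, ← Multiset.add_bind, Finset.val_add_val_compl]

theorem add_compl_right (A B : Finset G) :
    extDiff A B + extDiff A Bᶜ = extDiff A Finset.univ := by
  simp only [extDiff, ← Multiset.bind_add, ← Multiset.map_add, Finset.val_add_val_compl]

theorem compl_compl {A B : Finset G} {lam : ℕ}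
    (h : extDiff A B = lam • (Finset.univ : Finset G).val) :
    extDiff Aᶜ Bᶜ =
      (Fintype.card G + lam - A.card - B.card) • (Finset.univ : Finset G).val := by
  rw [Multiset.eq_nsmul_univ_iff] at h ⊢
  intro g
  have hA := congrArg (Multiset.count g) (add_compl_right A B)
  have hAc := congrArg (Multiset.count g) (add_compl_left A Bᶜ)
  simp only [Multiset.count_add, univ_right, univ_left, Multiset.count_nsmul,
    Multiset.count_univ, mul_one, Finset.card_compl, h g] at hA hAc
  have := B.card_le_univ
  omega

end extDiff

theorem Nat.add_sub_sub_mul_eq_sub_mul_sub {v a b lam : ℕ} (h : lam * v = a * b) (ha : a ≤ v)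
    (hb : b ≤ v) : (v + lam - a - b) * v = (v - a) * (v - b) := by
  have hab : a + b ≤ v + lam := by
    rcases v.eq_zero_or_pos with rfl | hv
    · omega
    · -- `(v - a) (v - b) ≥ 0` is `(v + lam - a - b) v ≥ 0`
      refine Nat.le_of_mul_le_mul_right ?_ hv
      nlinarith [Nat.mul_le_mul (Nat.sub_le_sub_left ha v) (Nat.sub_le_sub_left hb v)]
  zify [ha, hb, show a ≤ v + lam by omega, show b ≤ v + lam - a by omega] at h ⊢
  linear_combination h

theorem stmt_4_general {G : Type*} [AddGroup G] [Fintype G] [DecidableEq G]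
    (v m : ℕ) (hv : Fintype.card G = v)
    (A : Fin m → Finset G) (k : Fin m → ℕ)
    (hA : IsNDGPSEDF A k) :
    IsNDGPSEDF (fun i => (A i)ᶜ) (fun i => v - k i) := by
  obtain ⟨hcard, hdiff⟩ := hA
  have hk (i : Fin m) : k i ≤ v := hcard i ▸ hv ▸ (A i).card_le_univ
  refine ⟨fun i => by rw [Finset.card_compl, hcard, hv], fun i j hij => ?_⟩
  obtain ⟨lam, hlam, hΔ⟩ := hdiff i j hij
  refine ⟨v + lam - k i - k j, ?_, ?_⟩
  · rw [hv] at hlam ⊢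
    exact Nat.add_sub_sub_mul_eq_sub_mul_sub hlam (hk i) (hk j)
  · rw [extDiff.compl_compl hΔ, hcard, hcard, hv]

/-- if `{A₁,…,A_m}` is a non-disjoint `(v,m,k₁,…,k_m)`-GPSEDF in a finite
(not necessarily abelian) group `G` of order `v`, then the complements
`{G∖A₁,…,G∖A_m}` form a non-disjoint `(v,m,v−k₁,…,v−k_m)`-GPSEDF in `G`. -/
theorem stmt_4 {G : Type*} [AddGroup G] [Fintype G] [DecidableEq G]
    (v m : ℕ) (hv : Fintype.card G = v) (hm : 1 < m)
    (A : Fin m → Finset G) (k : Fin m → ℕ)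
    (hA : IsNDGPSEDF A k) :
    IsNDGPSEDF (fun i => (A i)ᶜ) (fun i => v - k i) :=
  stmt_4_general v m hv A k hA
end

section
/- Let G be a finite abelian group, let H be a subgroup of G, and let π : G → G/H be the quotient map. Suppose Ā = {ā_1, …, ā_r} and B̄ = {b̄_1, …, b̄_s} are subsets of G/H forming a non-disjoint (|G/H|, 2, r, s)-GPSEDF in G/H. Then the preimages A' = π^{−1}(Ā) and B' = π^{−1}(B̄) form a non-disjoint (|G|, 2, r|H|, s|H|)-GPSEDF in G. -/
/-!
The multiplicity of `c` in `Δ(A,B)` is the number of `a ∈ A` with `-c + a ∈ B`. For preimages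
of `Ā, B̄ ⊆ G/H` this condition depends only on the coset of `a`, so these `a` form the preimage
of the corresponding set in `G/H`. Every coset has `|H|` elements, so all multiplicities, and
with them `λ`, are multiplied by `|H|`.
-/

open Finset

section

variable {G : Type*} [AddGroup G]

theorem count_extDiff [DecidableEq G] (A B : Finset G) (c : G) :
    (extDiff A B).count c = #{a ∈ A | -c + a ∈ B} := by
  rw [extDiff, Multiset.count_bind, card_filter, Finset.sum]
  refine congrArg Multiset.sum (Multiset.map_congr rfl fun a _ => ?_)
  have key := Multiset.count_map_eq_count' (a - ·) B.val sub_right_injective (-c + a)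
  rw [show a - (-c + a) = c by simp [sub_eq_add_neg]] at key
  rw [key, Multiset.count_eq_of_nodup B.nodup]
  rfl

variable [Fintype G] (H : AddSubgroup G) [DecidableEq (G ⧸ H)]

def preimageMk (S : Finset (G ⧸ H)) : Finset G :=
  univ.filter fun g => (g : G ⧸ H) ∈ S

theorem card_preimageMk (S : Finset (G ⧸ H)) : #(preimageMk H S) = #S * Nat.card H := by
  have h := Nat.card_congr (QuotientAddGroup.preimageMkEquivAddSubgroupProdSet H (S : Set _))
  rw [Nat.card_prod] at h
  simp only [Nat.card_coe_set_eq, Set.ncard_coe_finset] at h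
  rw [mul_comm, ← h, ← Set.ncard_coe_finset, preimageMk, coe_filter_univ]
  rfl

theorem count_extDiff_preimageMk [H.Normal] [DecidableEq G] (A B : Finset (G ⧸ H)) (c : G) :
    (extDiff (preimageMk H A) (preimageMk H B)).count c
      = (extDiff A B).count (c : G ⧸ H) * Nat.card H := by
  have hfilter : {a ∈ preimageMk H A | -c + a ∈ preimageMk H B}
      = preimageMk H {x ∈ A | -(c : G ⧸ H) + x ∈ B} := by
    ext a
    simp [preimageMk]
  rw [count_extDiff, count_extDiff, hfilter, card_preimageMk]

theorem extDiff_preimageMk_eq_nsmul_univ [H.Normal] [DecidableEq G] [Fintype (G ⧸ H)]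
    {A B : Finset (G ⧸ H)} {lam : ℕ} (h : extDiff A B = lam • (univ : Finset (G ⧸ H)).val) :
    extDiff (preimageMk H A) (preimageMk H B) = (lam * Nat.card H) • (univ : Finset G).val := by
  ext c
  simp [count_extDiff_preimageMk, h, Multiset.count_nsmul]

end

/-- if `Ā`, `B̄` form a non-disjoint `(|G/H|,2,r,s)`-GPSEDF in the quotient
`G/H` of a finite abelian group `G` by a subgroup `H`, then their preimages under the
quotient map form a non-disjoint `(|G|,2,r|H|,s|H|)`-GPSEDF in `G`. -/
theorem stmt_7 {G : Type*} [AddCommGroup G] [Fintype G] [DecidableEq G]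
    (H : AddSubgroup G) [Fintype (G ⧸ H)] [DecidableEq (G ⧸ H)] [DecidablePred (· ∈ H)]
    (r s : ℕ) (Abar Bbar : Finset (G ⧸ H))
    (hAcard : Abar.card = r) (hBcard : Bbar.card = s)
    (hAB : ∃ lam : ℕ, lam * Fintype.card (G ⧸ H) = r * s ∧
      extDiff Abar Bbar = lam • (Finset.univ : Finset (G ⧸ H)).val ∧
      extDiff Bbar Abar = lam • (Finset.univ : Finset (G ⧸ H)).val) :
    letI A' : Finset G := Finset.univ.filter (fun g => (QuotientAddGroup.mk' H g) ∈ Abar)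
    letI B' : Finset G := Finset.univ.filter (fun g => (QuotientAddGroup.mk' H g) ∈ Bbar)
    A'.card = r * Fintype.card H ∧ B'.card = s * Fintype.card H ∧
    ∃ lam' : ℕ, lam' * Fintype.card G = (r * Fintype.card H) * (s * Fintype.card H) ∧
      extDiff A' B' = lam' • (Finset.univ : Finset G).val ∧
      extDiff B' A' = lam' • (Finset.univ : Finset G).val := by
  obtain ⟨lam, hlam, hAB, hBA⟩ := hAB
  have hG : Fintype.card G = Fintype.card (G ⧸ H) * Fintype.card H := by
    simpa only [Nat.card_eq_fintype_card] using
      AddSubgroup.card_eq_card_quotient_mul_card_addSubgroup H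
  rw [← Nat.card_eq_fintype_card (α := H)] at hG ⊢
  refine ⟨by rw [← hAcard]; exact card_preimageMk H Abar,
    by rw [← hBcard]; exact card_preimageMk H Bbar, lam * Nat.card H, ?_,
    extDiff_preimageMk_eq_nsmul_univ H hAB, extDiff_preimageMk_eq_nsmul_univ H hBA⟩
  rw [hG, mul_mul_mul_comm, hlam, mul_mul_mul_comm]
end

section
/- Let m ≥ 2 and let (d_1, …, d_m) and (c_0, …, c_m) be sequences of natural numbers such that all the ratios d_i/c_{i−1} are equal to a common rational number z with 0 < z < 1 (equivalently d_i·c_{j−1} = d_j·c_{i−1} for all i, j, and 1 ≤ d_i < c_{i−1}). Set v = c_0 c_1 ⋯ c_m. Then there exists a non-disjoint (v, m, vz, vz²)-PSEDF in ℤ_v; here vz = d_1 c_1 c_2 ⋯ c_m and vz² = d_1 d_2 c_2 c_3 ⋯ c_m are integers. -/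
namespace Multiset

variable {G : Type*}

def sumset [Add G] (s t : Multiset G) : Multiset G := s.bind fun a => t.map (a + ·)

def diffset [Sub G] (s t : Multiset G) : Multiset G := s.bind fun a => t.map (a - ·)

theorem card_sumset [Add G] (s t : Multiset G) : card (sumset s t) = card s * card t := by
  simp [sumset, card_bind]

theorem card_diffset [Sub G] (s t : Multiset G) : card (diffset s t) = card s * card t := by
  simp [diffset, card_bind]

theorem sumset_comm [AddCommMagma G] (s t : Multiset G) : sumset s t = sumset t s := by
  rw [sumset, bind_map_comm]
  exact bind_congr fun b _ => map_congr rfl fun a _ => add_comm a b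

theorem sumset_assoc [AddSemigroup G] (s t u : Multiset G) :
    sumset (sumset s t) u = sumset s (sumset t u) := by
  simp [sumset, bind_assoc, bind_map, map_bind, add_assoc]

theorem map_sumset {H F : Type*} [Add G] [Add H] [FunLike F G H] [AddHomClass F G H] (f : F)
    (s t : Multiset G) : (sumset s t).map f = sumset (s.map f) (t.map f) := by
  simp [sumset, map_bind, bind_map]

theorem diffset_sumset_sumset [SubtractionCommMonoid G] (s₁ s₂ t₁ t₂ : Multiset G) :
    diffset (sumset s₁ s₂) (sumset t₁ t₂) = sumset (diffset s₁ t₁) (diffset s₂ t₂) := by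
  simp only [diffset, sumset, bind_assoc, bind_map, map_bind, map_map, Function.comp_def,
    add_sub_add_comm]
  exact bind_congr fun a _ => bind_bind _ _

theorem sumset_univ [AddGroup G] [Fintype G] (s : Multiset G) :
    sumset s Finset.univ.val = card s • Finset.univ.val := by
  have hshift (a : G) : Finset.univ.val.map (a + ·) = Finset.univ.val :=
    map_univ_val_equiv (Equiv.addLeft a)
  rw [sumset, bind_congr fun a _ => hshift a, Multiset.bind, map_const', join, sum_replicate]

theorem eq_univ_val_of_nodup_of_card_eq [Fintype G] {s : Multiset G} (hs : s.Nodup)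
    (hcard : card s = Fintype.card G) : s = Finset.univ.val :=
  congrArg Finset.val ((Finset.card_eq_iff_eq_univ ⟨s, hs⟩).1 hcard)

theorem filter_mod_lt_range_mul {e L : ℕ} (hL : L ≤ e) (N : ℕ) :
    (range (e * N)).filter (· % e < L) = sumset ((range N).map (e * ·)) (range L) := by
  rw [sumset, bind_map]
  induction N with
  | zero => simp
  | succ n ih =>
    have hlow : (range e).filter (· < L) = range L :=
      (Nodup.ext ((nodup_range e).filter _) (nodup_range L)).2 fun r => by
        simp only [mem_filter, mem_range]; omega
    rw [Nat.mul_succ, range_add, filter_add, ih, range_succ, cons_bind, add_comm, filter_map]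
    congr 1
    rw [← hlow]
    congr 1
    exact filter_congr fun r hr => by
      rw [Function.comp_apply, Nat.mul_add_mod, Nat.mod_eq_of_lt (mem_range.1 hr)]

theorem range_mul_eq_sumset (e N : ℕ) :
    range (e * N) = sumset ((range N).map (e * ·)) (range e) := by
  rcases Nat.eq_zero_or_pos e with rfl | he
  · simp [sumset]
  · rw [← filter_mod_lt_range_mul le_rfl, filter_eq_self.2 fun x _ => Nat.mod_lt x he]

end Multiset

namespace ZMod

open Multiset

variable {v : ℕ} [NeZero v]

theorem univ_val_eq_map_range : (Finset.univ : Finset (ZMod v)).val = (range v).map Nat.cast := by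
  refine (eq_univ_val_of_nodup_of_card_eq ((nodup_range v).map_on fun x hx y hy hxy => ?_)
    (by simp)).symm
  have := congrArg ZMod.val hxy
  rwa [val_natCast_of_lt (mem_range.1 hx), val_natCast_of_lt (mem_range.1 hy)] at this

theorem diffset_multiples_range {e N : ℕ} (hv : v = e * N) :
    diffset ((range N).map fun t => ((e * t : ℕ) : ZMod v)) ((range e).map Nat.cast)
      = Finset.univ.val := by
  have hprod : diffset ((range N).map fun t => ((e * t : ℕ) : ZMod v)) ((range e).map Nat.cast)
      = (range N ×ˢ range e).map fun p => ((e * p.1 : ℕ) : ZMod v) - p.2 := by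
    simp [diffset, SProd.sprod, Multiset.product, bind_map, map_bind]
  rw [hprod]
  refine eq_univ_val_of_nodup_of_card_eq
    (((nodup_range N).product (nodup_range e)).map_on ?_) (by simp [hv, mul_comm])
  rintro ⟨t, r⟩ htr ⟨t', r'⟩ htr' h
  simp only [Multiset.mem_product, mem_range] at htr htr'
  have he : e ≠ 0 := by omega
  -- `e t - r` determines `r` modulo `e`, and then `t` modulo `N`.
  have hmod : e * t + r' ≡ e * t' + r [MOD e * N] := by
    rw [← hv, ← ZMod.natCast_eq_natCast_iff]
    push_cast at h ⊢
    linear_combination h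
  have hr : r' = r := by
    have := hmod.of_mul_right N
    rwa [Nat.ModEq, Nat.mul_add_mod, Nat.mul_add_mod, Nat.mod_eq_of_lt htr'.2,
      Nat.mod_eq_of_lt htr.2] at this
  subst hr
  have ht := (Nat.ModEq.add_right_cancel' r' hmod).mul_left_cancel' he
  rw [ht.eq_of_lt_of_lt htr.1 htr'.1]

def modLtSet (v e L : ℕ) [NeZero v] : Finset (ZMod v) :=
  Finset.univ.filter fun x => x.val % e < L

variable {e N L : ℕ}

theorem modLtSet_val (hv : v = e * N) (hL : L ≤ e) :
    (modLtSet v e L).val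
      = sumset ((range N).map fun t => ((e * t : ℕ) : ZMod v)) ((range L).map Nat.cast) := by
  rw [modLtSet, Finset.filter_val, univ_val_eq_map_range, filter_map,
    filter_congr fun n hn => by rw [Function.comp_apply, val_natCast_of_lt (mem_range.1 hn)],
    hv, filter_mod_lt_range_mul hL, ← Nat.coe_castAddMonoidHom, map_sumset, map_map]
  rfl

theorem card_modLtSet (hv : v = e * N) (hL : L ≤ e) : (modLtSet v e L).card = N * L := by
  rw [Finset.card_def, modLtSet_val hv hL, card_sumset]
  simp

theorem extDiff_modLtSet {K Q : ℕ} (hv : v = e * K * N) (hL : L ≤ e) (hQ : Q ≤ K) :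
    extDiff (modLtSet v e L) (modLtSet v (e * K) (e * Q))
      = (L * (N * Q)) • (Finset.univ : Finset (ZMod v)).val := by
  -- `A = e ℤ_v + [0, L)` and `B = [0, e) + (e K ℤ_v + e [0, Q))`; `e ℤ_v - [0, e)` is all of `ℤ_v`.
  have hA := modLtSet_val (v := v) (N := K * N) (by rw [hv, mul_assoc]) hL
  have hB := modLtSet_val hv (Nat.mul_le_mul_left e hQ)
  rw [range_mul_eq_sumset e Q, ← Nat.coe_castAddMonoidHom, map_sumset, map_map,
    Nat.coe_castAddMonoidHom, ← sumset_assoc, sumset_comm] at hB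
  change diffset _ _ = _
  rw [hA, hB, diffset_sumset_sumset, diffset_multiples_range (by rw [hv, mul_assoc]), sumset_comm,
    sumset_univ, card_diffset, card_sumset]
  simp

end ZMod

theorem extDiff_comm_of_eq_nsmul_univ {G : Type*} [AddCommGroup G] [Fintype G] {A B : Finset G}
    {n : ℕ} (h : extDiff A B = n • Finset.univ.val) : extDiff B A = n • Finset.univ.val := by
  have hswap : (extDiff A B).map Neg.neg = extDiff B A := by
    simp only [extDiff, Multiset.map_bind, Multiset.map_map, Function.comp_def, neg_sub]
    exact Multiset.bind_map_comm _ _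
  rw [← hswap, h, Multiset.map_nsmul]
  exact congrArg _ (Multiset.map_univ_val_equiv (Equiv.neg G))

open Finset ZMod

section ProdRange

variable {v : ℕ} [NeZero v] {C : ℕ → ℕ} {n i j a b : ℕ}

theorem prod_range_eq_mul_prod_Ico (hi : i ≤ n) :
    ∏ t ∈ range (n + 1), C t = (∏ t ∈ range i, C t) * C i * ∏ t ∈ Ico (i + 1) (n + 1), C t := by
  rw [← prod_range_succ, prod_range_mul_prod_Ico _ (by omega)]

theorem card_modLtSet_prod_range (hv : v = ∏ t ∈ range (n + 1), C t) (hi : i ≤ n)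
    (ha : a ≤ C i) :
    (modLtSet v (∏ t ∈ range (i + 1), C t) ((∏ t ∈ range i, C t) * a)).card
      = (∏ t ∈ Ico (i + 1) (n + 1), C t) * ((∏ t ∈ range i, C t) * a) :=
  card_modLtSet (by rw [hv, prod_range_mul_prod_Ico _ (by omega)])
    (by rw [prod_range_succ]; exact Nat.mul_le_mul_left _ ha)

theorem extDiff_modLtSet_prod_range (hv : v = ∏ t ∈ range (n + 1), C t) (hij : i < j)
    (hj : j ≤ n) (ha : a ≤ C i) (hb : b ≤ C j) :
    extDiff (modLtSet v (∏ t ∈ range (i + 1), C t) ((∏ t ∈ range i, C t) * a))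
        (modLtSet v (∏ t ∈ range (j + 1), C t) ((∏ t ∈ range j, C t) * b))
      = ((∏ t ∈ range i, C t) * a * ((∏ t ∈ Ico (j + 1) (n + 1), C t) *
          ((∏ t ∈ Ico (i + 1) j, C t) * b))) • (univ : Finset (ZMod v)).val := by
  have hsplit : ∏ t ∈ range j, C t = (∏ t ∈ range (i + 1), C t) * ∏ t ∈ Ico (i + 1) j, C t :=
    (prod_range_mul_prod_Ico _ hij).symm
  have hnext : ∏ t ∈ range (j + 1), C t
      = (∏ t ∈ range (i + 1), C t) * ((∏ t ∈ Ico (i + 1) j, C t) * C j) := by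
    rw [prod_range_succ, hsplit, mul_assoc]
  rw [hnext, hsplit, mul_assoc]
  refine extDiff_modLtSet ?_ (by rw [prod_range_succ]; exact Nat.mul_le_mul_left _ ha)
    (Nat.mul_le_mul_left _ hb)
  rw [hv, ← prod_range_mul_prod_Ico _ (show j + 1 ≤ n + 1 by omega), hnext]

end ProdRange

theorem exists_extDiff_eq_nsmul_univ {m : ℕ} (C : ℕ → ℕ) (d : Fin m → ℕ)
    (hdC : ∀ i, d i < C i) (hz : ∀ i j : Fin m, d i * C j = d j * C i)
    {v : ℕ} [NeZero v] (hv : v = ∏ t ∈ range (m + 1), C t) (i₀ i₁ : Fin m) {k lam : ℕ}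
    (hk : k * C i₀ = d i₀ * v) (hlam : lam * (C i₀ * C i₁) = d i₀ * d i₁ * v) :
    ∃ A : Fin m → Finset (ZMod v), (∀ i, (A i).card = k) ∧
      ∀ i j, i ≠ j → extDiff (A i) (A j) = lam • (univ : Finset (ZMod v)).val := by
  have hpos (i : Fin m) : 0 < C i := (Nat.zero_le _).trans_lt (hdC i)
  set A : Fin m → Finset (ZMod v) :=
    fun i => modLtSet v (∏ t ∈ range (i + 1), C t) ((∏ t ∈ range i, C t) * d i)
  have hlt (i j : Fin m) (hij : i < j) :
      extDiff (A i) (A j) = lam • (univ : Finset (ZMod v)).val := by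
    rw [extDiff_modLtSet_prod_range hv hij j.isLt.le (hdC i).le (hdC j).le]
    congr 1
    apply Nat.eq_of_mul_eq_mul_right (Nat.mul_pos (hpos i₀) (hpos i₁))
    have hPj : ∏ t ∈ range j, C t
        = (∏ t ∈ range i, C t) * C i * ∏ t ∈ Ico ((i : ℕ) + 1) j, C t := by
      rw [← prod_range_succ, prod_range_mul_prod_Ico _ hij]
    rw [hlam, hv, prod_range_eq_mul_prod_Ico j.isLt.le, hPj]
    set P := ∏ t ∈ range i, C t
    set S := ∏ t ∈ Ico ((i : ℕ) + 1) j, C t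
    set I := ∏ t ∈ Ico ((j : ℕ) + 1) (m + 1), C t
    linear_combination (P * S * I * d j * C i₁) * hz i i₀ + (P * S * I * d i₀ * C i) * hz j i₁
  refine ⟨A, fun i => ?_, fun i j hij => ?_⟩
  · rw [card_modLtSet_prod_range hv i.isLt.le (hdC i).le]
    apply Nat.eq_of_mul_eq_mul_right (hpos i₀)
    rw [hk, hv, prod_range_eq_mul_prod_Ico i.isLt.le]
    linear_combination ((∏ t ∈ Ico ((i : ℕ) + 1) (m + 1), C t) * ∏ t ∈ range i, C t) * hz i i₀
  · rcases lt_or_gt_of_ne hij with h | h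
    · exact hlt i j h
    · exact extDiff_comm_of_eq_nsmul_univ (hlt j i h)

/-- let `m ≥ 2` and let `(d₁,…,d_m)`, `(c₀,…,c_m)` be naturals with all
ratios `dᵢ/c_{i-1}` equal to a common rational `z` with `0 < z < 1` (i.e.
`dᵢ·c_{j-1} = dⱼ·c_{i-1}` and `1 ≤ dᵢ < c_{i-1}`).  With `v = c₀c₁⋯c_m`, there exists a
non-disjoint `(v, m, vz, vz²)`-PSEDF in `ℤ_v`; here `k = vz` and `λ = vz²` are the
natural numbers determined by `k·c₀ = d₁·v` and `λ·c₀c₁ = d₁d₂·v`. -/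
theorem stmt_9 (m : ℕ) (hm : 2 ≤ m) (d : Fin m → ℕ) (c : Fin (m + 1) → ℕ)
    (hd₁ : ∀ i, 1 ≤ d i) (hd₂ : ∀ i, d i < c i.castSucc)
    (hz : ∀ i j, d i * c j.castSucc = d j * c i.castSucc)
    (hcm : 1 ≤ c (Fin.last m))
    (v k lam : ℕ) (hv : v = ∏ i, c i)
    (hk : k * c (⟨0, by omega⟩ : Fin m).castSucc = d ⟨0, by omega⟩ * v)
    (hlam : lam * (c (⟨0, by omega⟩ : Fin m).castSucc * c (⟨1, by omega⟩ : Fin m).castSucc)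
      = d ⟨0, by omega⟩ * d ⟨1, by omega⟩ * v) :
    haveI : NeZero v := ⟨by
      subst hv
      exact (Finset.prod_pos (fun i _ => Fin.lastCases (by omega)
        (fun j => by have h1 := hd₁ j; have h2 := hd₂ j; omega) i)).ne'⟩
    ∃ A : Fin m → Finset (ZMod v),
      (∀ i, (A i).card = k) ∧
      ∀ i j, i ≠ j → extDiff (A i) (A j) = lam • (Finset.univ : Finset (ZMod v)).val := by
  have hc : ∀ i, c i ≠ 0 :=
    Fin.lastCases (by omega) fun i => ((Nat.zero_le _).trans_lt (hd₂ i)).ne'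
  have : NeZero v := ⟨hv ▸ prod_ne_zero_iff.2 fun i _ => hc i⟩
  open Fin.NatCast in
  have hC (i : Fin m) : c (i : ℕ) = c i.castSucc := by simp
  open Fin.NatCast in
  refine exists_extDiff_eq_nsmul_univ (fun n => c n) d (fun i => hC i ▸ hd₂ i)
    (fun i j => by simpa only [hC] using hz i j) ?_ ⟨0, by omega⟩ ⟨1, by omega⟩ (by rwa [hC])
    (by rwa [hC, hC])
  rw [hv, ← Fin.prod_univ_eq_prod_range]
  simp
end

section
/- Let G be a finite group of order v (written multiplicatively, not necessarily abelian) and let H_1, …, H_m be distinct subgroups of G such that H_iH_j = G for all pairs i ≠ j. Then {H_1, …, H_m} is a non-disjoint (v, m, |H_1|, …, |H_m|)-GPSEDF in G: for all i ≠ j, the multiset Δ(H_i, H_j) = {xy^{−1} : x ∈ H_i, y ∈ H_j} consists of exactly |H_i ∩ H_j| copies of each element of G. -/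
/-!
The multiplicity of `g` in `Δ(A, B)` is `|A ∩ gB|`. When `A = H` and `B = K` are subgroups
with `HK = G`, write `g = hk` with `h ∈ H`, `k ∈ K`: then `gK = hK`, and since `hH = H`,
`H ∩ hK = h(H ∩ K)`, which has `|H ∩ K|` elements.
-/

open Pointwise

/-- The external difference multiset `Δ(A,B) = {ab⁻¹ : a ∈ A, b ∈ B}` (with multiplicity),
for a multiplicatively written group. -/
def extDiffMul {G : Type*} [Group G] (A B : Finset G) : Multiset G :=
  A.val.bind fun a => B.val.map fun b => a * b⁻¹

section

open Finset

variable {G : Type*} [Group G] [DecidableEq G]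

theorem count_map_mul_inv (a g : G) (B : Finset G) :
    (B.val.map fun b => a * b⁻¹).count g = if g⁻¹ * a ∈ B then 1 else 0 := by
  have hfib : ∀ b, g = a * b⁻¹ ↔ g⁻¹ * a = b := fun b => by
    rw [eq_mul_inv_iff_mul_eq, ← eq_inv_mul_iff_mul_eq, eq_comm]
  rw [Multiset.count_map, Multiset.filter_congr fun b _ => hfib b,
    ← Multiset.count_eq_card_filter_eq, Multiset.count_eq_of_nodup B.nodup]
  rfl

theorem count_extDiffMul (A B : Finset G) (g : G) :
    (extDiffMul A B).count g = #(A ∩ g • B) := by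
  simp only [extDiffMul, Multiset.count_bind, count_map_mul_inv]
  rw [← Finset.sum_eq_multiset_sum, ← Finset.card_filter]
  congr 1
  ext a
  rw [Finset.mem_filter, Finset.mem_inter, ← Finset.inv_smul_mem_iff, smul_eq_mul]

theorem smul_finset_eq_of_mem {A : Finset G} {H : Subgroup G} (hA : (A : Set G) = H) {h : G}
    (hh : h ∈ H) : h • A = A := by
  ext a
  rw [← Finset.inv_smul_mem_iff, ← Finset.mem_coe, ← Finset.mem_coe (s := A), hA, smul_eq_mul,
    SetLike.mem_coe, SetLike.mem_coe, Subgroup.mul_mem_cancel_left _ (inv_mem hh)]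

theorem card_inter_smul_eq_card_inter {A B : Finset G} {H K : Subgroup G}
    (hA : (A : Set G) = H) (hB : (B : Set G) = K) {g : G} (hg : g ∈ (H : Set G) * (K : Set G)) :
    #(A ∩ g • B) = #(A ∩ B) := by
  obtain ⟨h, hh, k, hk, rfl⟩ := hg
  calc #(A ∩ (h * k) • B) = #(h • A ∩ h • B) := by
        rw [mul_smul, smul_finset_eq_of_mem hB hk, smul_finset_eq_of_mem hA hh]
    _ = #(A ∩ B) := by rw [← Finset.smul_finset_inter, Finset.card_smul_finset]

theorem extDiffMul_eq_card_inter_nsmul_univ [Fintype G] {A B : Finset G} {H K : Subgroup G}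
    (hA : (A : Set G) = H) (hB : (B : Set G) = K) (hHK : (H : Set G) * (K : Set G) = Set.univ) :
    extDiffMul A B = #(A ∩ B) • (Finset.univ : Finset G).val := by
  ext g
  rw [count_extDiffMul, card_inter_smul_eq_card_inter hA hB (hHK ▸ Set.mem_univ g),
    Multiset.count_nsmul, Multiset.count_eq_one_of_mem Finset.univ.nodup (Finset.mem_univ g),
    mul_one]

end

theorem stmt_14_general {G : Type*} [Group G] [Fintype G] [DecidableEq G]
    (m : ℕ) (H : Fin m → Subgroup G) (A : Fin m → Finset G)
    (hA : ∀ i, (A i : Set G) = (H i : Set G))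
    (hprod : ∀ i j, i ≠ j → (H i : Set G) * (H j : Set G) = Set.univ) :
    ∀ i j, i ≠ j →
      extDiffMul (A i) (A j) = (A i ∩ A j).card • (Finset.univ : Finset G).val :=
  fun i j hij => extDiffMul_eq_card_inter_nsmul_univ (hA i) (hA j) (hprod i j hij)

/-- let `H₁,…,H_m` be distinct subgroups of a finite (not necessarily
abelian) group `G` with `HᵢHⱼ = G` for all `i ≠ j`.  Then `{H₁,…,H_m}` is a non-disjoint
`(|G|, m, |H₁|, …, |H_m|)`-GPSEDF: for all `i ≠ j`, the multiset `Δ(Hᵢ,Hⱼ)` consists of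
exactly `|Hᵢ ∩ Hⱼ|` copies of each element of `G`.  (Here `Aᵢ` is the finset of elements
of the subgroup `Hᵢ`.) -/
theorem stmt_14 {G : Type*} [Group G] [Fintype G] [DecidableEq G]
    (m : ℕ) (hm : 1 < m) (H : Fin m → Subgroup G) (A : Fin m → Finset G)
    (hA : ∀ i, (A i : Set G) = (H i : Set G))
    (hdist : ∀ i j, i ≠ j → H i ≠ H j)
    (hprod : ∀ i j, i ≠ j → (H i : Set G) * (H j : Set G) = Set.univ) :
    ∀ i j, i ≠ j →
      extDiffMul (A i) (A j) = (A i ∩ A j).card • (Finset.univ : Finset G).val :=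
  stmt_14_general m H A hA hprod
end

section
/- Let p be a prime and let G = ℤ_p × ℤ_p. Then G has exactly p+1 subgroups of order p, and the family H of all these p+1 subgroups is a non-disjoint (p², p+1, p, 1)-PSEDF in G: for any two distinct subgroups H_i, H_j of order p, the multiset Δ(H_i, H_j) contains each element of G exactly once. -/
/-!
In a group of exponent `p`, every nonzero element generates a subgroup of order `p`, and two
distinct such subgroups meet trivially since each is generated by any of its nonzero elements.
So the `p² - 1` nonzero elements of `ℤ_p × ℤ_p` split into blocks of `p - 1`, one per subgroup,
giving `p + 1` subgroups. For distinct `H`, `K` the map `(x, y) ↦ x - y` on `H × K` is injective by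
trivial intersection, hence bijective onto `G` since `|H| |K| = p² = |G|`.
-/

open AddSubgroup

theorem Nat.card_subtype_ne_add_one {α : Type*} [Finite α] (a : α) :
    Nat.card {b // b ≠ a} + 1 = Nat.card α := by
  classical
  rw [← Finite.card_option, Nat.card_congr (Equiv.optionSubtypeNe a)]

namespace AddSubgroup

variable {G : Type*} [AddGroup G]

theorem existsUnique_sub_eq_of_disjoint [Finite G] {H K : AddSubgroup G} (hHK : Disjoint H K)
    (hcard : Nat.card H * Nat.card K = Nat.card G) (g : G) :
    ∃! q : G × G, q.1 ∈ H ∧ q.2 ∈ K ∧ q.1 - q.2 = g := by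
  have hbij : Function.Bijective fun x : H × K => (x.1 + x.2 : G) :=
    (Nat.bijective_iff_injective_and_card _).mpr
      ⟨add_injective_of_disjoint hHK, (Nat.card_prod H K).trans hcard⟩
  obtain ⟨x, hx, hx_unique⟩ := hbij.existsUnique g
  refine ⟨(x.1, -x.2), ⟨x.1.2, neg_mem x.2.2, by simpa [sub_eq_add_neg] using hx⟩, ?_⟩
  rintro ⟨a, b⟩ ⟨ha, hb, hab⟩
  obtain rfl := hx_unique (⟨a, ha⟩, ⟨-b, neg_mem hb⟩) (by simpa [sub_eq_add_neg] using hab)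
  simp

variable {p : ℕ} [Fact p.Prime]

theorem zmultiples_eq_of_natCard_eq_prime {H : AddSubgroup G} (hH : Nat.card H = p) {g : G}
    (hgH : g ∈ H) (hg : g ≠ 0) : zmultiples g = H := by
  have htop : zmultiples (⟨g, hgH⟩ : H) = ⊤ :=
    zmultiples_eq_top_of_prime_card hH (by simpa using hg)
  simpa [AddMonoidHom.map_zmultiples, ← AddMonoidHom.range_eq_map] using
    congrArg (map H.subtype) htop

theorem disjoint_of_natCard_eq_prime {H K : AddSubgroup G} (hH : Nat.card H = p)
    (hK : Nat.card K = p) (hHK : H ≠ K) : Disjoint H K := by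
  refine disjoint_def.mpr fun {g} hgH hgK => ?_
  by_contra hg
  exact hHK <| (zmultiples_eq_of_natCard_eq_prime hH hgH hg).symm.trans
    (zmultiples_eq_of_natCard_eq_prime hK hgK hg)

theorem natCard_zmultiples_of_nsmul_eq_zero {g : G} (hpg : p • g = 0) (hg : g ≠ 0) :
    Nat.card (zmultiples g) = p := by
  rw [Nat.card_zmultiples, addOrderOf_eq_prime hpg hg]

def nonzeroEquivSigmaSubgroupsOfPrimeCard (hG : ∀ g : G, p • g = 0) :
    {g : G // g ≠ 0} ≃ Σ H : {H : AddSubgroup G // Nat.card H = p}, {x : H.1 // x ≠ 0} where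
  toFun g := ⟨⟨zmultiples g.1, natCard_zmultiples_of_nsmul_eq_zero (hG g.1) g.2⟩,
    ⟨⟨g.1, mem_zmultiples g.1⟩, by simpa using g.2⟩⟩
  invFun x := ⟨x.2.1.1, by simpa using x.2.2⟩
  left_inv _ := rfl
  right_inv := by
    rintro ⟨⟨H, hH⟩, ⟨⟨x, hx⟩, hx0⟩⟩
    obtain rfl := zmultiples_eq_of_natCard_eq_prime hH hx (by simpa using hx0)
    rfl

theorem natCard_subgroups_of_prime_card_mul_add_one [Finite G] (hG : ∀ g : G, p • g = 0) :
    Nat.card {H : AddSubgroup G // Nat.card H = p} * (p - 1) + 1 = Nat.card G := by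
  have : Fintype {H : AddSubgroup G // Nat.card H = p} := Fintype.ofFinite _
  have hfiber (H : {H : AddSubgroup G // Nat.card H = p}) :
      Nat.card {x : H.1 // x ≠ 0} = p - 1 := by
    have := Nat.card_subtype_ne_add_one (0 : H.1)
    omega
  rw [← Nat.card_subtype_ne_add_one (0 : G), Nat.card_congr (nonzeroEquivSigmaSubgroupsOfPrimeCard hG),
    Nat.card_sigma]
  simp [hfiber, Nat.card_eq_fintype_card]

end AddSubgroup

theorem ZMod.nsmul_prod_eq_zero (n : ℕ) (g : ZMod n × ZMod n) : n • g = 0 := by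
  ext <;> simp [nsmul_eq_mul]

/-- for a prime `p`, the group `G = ℤ_p × ℤ_p` has exactly `p+1` subgroups
of order `p`, and these form a non-disjoint `(p², p+1, p, 1)`-PSEDF: for any two distinct
subgroups `H ≠ K` of order `p`, the difference multiset `Δ(H,K)` contains each element
`g` of `G` exactly once, i.e. there is exactly one pair `(x, y) ∈ H × K` with
`x - y = g`. -/
theorem stmt_15 (p : ℕ) (hp : p.Prime) :
    Nat.card {H : AddSubgroup (ZMod p × ZMod p) // Nat.card H = p} = p + 1 ∧
    ∀ H K : AddSubgroup (ZMod p × ZMod p), Nat.card H = p → Nat.card K = p → H ≠ K →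
      ∀ g : ZMod p × ZMod p,
        Nat.card {q : (ZMod p × ZMod p) × (ZMod p × ZMod p) //
          q.1 ∈ H ∧ q.2 ∈ K ∧ q.1 - q.2 = g} = 1 := by
  have : Fact p.Prime := ⟨hp⟩
  have hcard : Nat.card (ZMod p × ZMod p) = p * p := by simp
  constructor
  · have hcount := natCard_subgroups_of_prime_card_mul_add_one (ZMod.nsmul_prod_eq_zero p)
    rw [hcard] at hcount
    obtain ⟨q, rfl⟩ : ∃ q, p = q + 1 := ⟨p - 1, (Nat.succ_pred_eq_of_pos hp.pos).symm⟩
    have hq : 0 < q := Nat.lt_of_succ_lt_succ hp.two_le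
    simp only [Nat.add_sub_cancel] at hcount
    exact Nat.eq_of_mul_eq_mul_right hq (by linarith)
  · intro H K hH hK hHK g
    obtain ⟨_⟩ := (unique_subtype_iff_existsUnique _).mpr <|
      existsUnique_sub_eq_of_disjoint (disjoint_of_natCard_eq_prime hH hK hHK)
        (by rw [hH, hK, hcard]) g
    exact Nat.card_unique
end

section
/- Let G be a finite group of order v (written multiplicatively with identity e) and let H = {H_1, …, H_m} (m ≥ 2) be a collection of subgroups of G such that |G| = |H_i||H_j| for all i ≠ j and H is a partition of G, i.e. every non-identity element of G belongs to exactly one H_i. Then: (i) for all i ≠ j, Δ(H_i, H_j) contains each element of G exactly once (so H is a non-disjoint GPSEDF with λ_{i,j} = 1 for all i ≠ j); and (ii) the family H' = {H_1∖{e}, …, H_m∖{e}} consists of pairwise disjoint sets and is a classical GEDF: the multiset union ⋃_{i≠j} Δ(H_i∖{e}, H_j∖{e}) equals λ(G∖{e}) where λ = (∑_{i≠j} (|H_i|−1)(|H_j|−1))/(v−1). -/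
open Finset

section ExternalDifferences

variable {G : Type*} [Group G]

lemma extDiffMul_eq_map_product (A B : Finset G) :
    extDiffMul A B = (A ×ˢ B).val.map fun p => p.1 * p.2⁻¹ := by
  rw [extDiffMul, Finset.product_val]
  change _ = Multiset.map _ (Multiset.bind _ _)
  simp [Multiset.map_bind]

lemma mem_extDiffMul {A B : Finset G} {g : G} :
    g ∈ extDiffMul A B ↔ ∃ a ∈ A, ∃ b ∈ B, a * b⁻¹ = g := by
  simp [extDiffMul]

lemma card_extDiffMul (A B : Finset G) : Multiset.card (extDiffMul A B) = #A * #B := by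
  simp [extDiffMul_eq_map_product]

lemma Subgroup.eq_and_eq_of_mul_inv_eq_of_disjoint {H K : Subgroup G} (hHK : Disjoint H K)
    {a a' b b' : G} (ha : a ∈ H) (ha' : a' ∈ H) (hb : b ∈ K) (hb' : b' ∈ K)
    (h : a * b⁻¹ = a' * b'⁻¹) : a = a' ∧ b = b' := by
  have hab : a'⁻¹ * a = b'⁻¹ * b := by
    rw [inv_mul_eq_iff_eq_mul, ← mul_assoc, ← mul_inv_eq_iff_eq_mul, h]
  have h1 : a'⁻¹ * a = 1 :=
    Subgroup.disjoint_def.mp hHK (mul_mem (inv_mem ha') ha) (hab ▸ mul_mem (inv_mem hb') hb)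
  exact ⟨(inv_mul_eq_one.mp h1).symm, (inv_mul_eq_one.mp (hab ▸ h1)).symm⟩

variable {H K : Subgroup G} {A B : Finset G}

lemma nodup_extDiffMul (hHK : Disjoint H K) (hA : (A : Set G) ⊆ H) (hB : (B : Set G) ⊆ K) :
    (extDiffMul A B).Nodup := by
  rw [extDiffMul_eq_map_product]
  refine (A ×ˢ B).nodup.map_on fun p hp q hq h => ?_
  rw [Finset.mem_val, Finset.mem_product] at hp hq
  obtain ⟨h1, h2⟩ := Subgroup.eq_and_eq_of_mul_inv_eq_of_disjoint hHK
    (hA hp.1) (hA hq.1) (hB hp.2) (hB hq.2) h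
  exact Prod.ext h1 h2

variable [Fintype G]

lemma extDiffMul_eq_univ (hHK : Disjoint H K) (hA : (A : Set G) ⊆ H) (hB : (B : Set G) ⊆ K)
    (hcard : #A * #B = Fintype.card G) : extDiffMul A B = (univ : Finset G).val := by
  let S : Finset G := ⟨extDiffMul A B, nodup_extDiffMul hHK hA hB⟩
  exact congrArg Finset.val (eq_univ_of_card S (by simp [S, card_extDiffMul, hcard]))

variable [DecidableEq G]

lemma extDiffMul_erase_one_eq_compl (hHK : Disjoint H K) (hA : (A : Set G) = H)
    (hB : (B : Set G) = K) (hcard : #A * #B = Fintype.card G) :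
    extDiffMul (A.erase 1) (B.erase 1) = (A ∪ B)ᶜ.val := by
  have hA' (g : G) : g ∈ A ↔ g ∈ H := Set.ext_iff.mp hA g
  have hB' (g : G) : g ∈ B ↔ g ∈ K := Set.ext_iff.mp hB g
  have hsub {C : Finset G} {L : Subgroup G} (hC : (C : Set G) = L) :
      ((C.erase 1 : Finset G) : Set G) ⊆ L :=
    hC ▸ Finset.coe_subset.mpr (erase_subset 1 C)
  refine (Multiset.Nodup.ext (nodup_extDiffMul hHK (hsub hA) (hsub hB)) (nodup _)).mpr
    fun g => ?_
  simp only [mem_extDiffMul, mem_val, mem_erase, mem_compl, mem_union, not_or]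
  constructor
  · rintro ⟨a, ⟨ha1, ha⟩, b, ⟨hb1, hb⟩, rfl⟩
    simp only [hA', hB'] at ha hb ⊢
    constructor
    · intro hab
      have : b⁻¹ ∈ H := by simpa using mul_mem (inv_mem ha) hab
      exact hb1 (Subgroup.disjoint_def.mp hHK (inv_mem_iff.mp this) hb)
    · intro hab
      have : a ∈ K := by simpa using mul_mem hab hb
      exact ha1 (Subgroup.disjoint_def.mp hHK ha this)
  · rintro ⟨hgA, hgB⟩
    have hg : g ∈ extDiffMul A B := by
      rw [extDiffMul_eq_univ hHK hA.le hB.le hcard]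
      exact mem_univ g
    obtain ⟨a, ha, b, hb, rfl⟩ := mem_extDiffMul.mp hg
    refine ⟨a, ⟨?_, ha⟩, b, ⟨?_, hb⟩, rfl⟩
    · rintro rfl
      exact hgB ((hB' _).mpr (by simpa using inv_mem ((hB' b).mp hb)))
    · rintro rfl
      exact hgA (by simpa using ha)

end ExternalDifferences

lemma Finset.sum_sum_erase_ite_and {ι : Type*} [Fintype ι] [DecidableEq ι] (p : ι → Prop)
    [DecidablePred p] :
    ∑ i, ∑ j ∈ univ.erase i, (if p i ∧ p j then 1 else 0) = #{i | p i} * (#{i | p i} - 1) := by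
  have hinner (i : ι) (hi : p i) :
      ∑ j ∈ univ.erase i, (if p j then 1 else 0) = #{i | p i} - 1 := by
    rw [sum_boole, Nat.cast_id, filter_erase, card_erase_of_mem (by simpa using hi)]
  simp only [ite_and, sum_ite_irrel, sum_const_zero]
  rw [← sum_filter, sum_congr rfl fun i hi => hinner i (mem_filter.mp hi).2, sum_const,
    smul_eq_mul]

section Partitions

variable {G : Type*} [Group G] [Fintype G] [DecidableEq G] {ι : Type*} [Fintype ι] [DecidableEq ι]

lemma sum_sum_erase_compl_union_val {A : ι → Finset G} (hone : ∀ i, 1 ∈ A i)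
    (hpart : ∀ g : G, g ≠ 1 → ∃! i, g ∈ A i) :
    ∑ i, ∑ j ∈ univ.erase i, (A i ∪ A j)ᶜ.val
      = ((Fintype.card ι - 1) * (Fintype.card ι - 2)) • (univ.erase 1 : Finset G).val := by
  ext g
  simp only [Multiset.count_sum', Multiset.count_nsmul, Multiset.count_eq_of_nodup (nodup _),
    mem_val, mem_compl, mem_union, not_or]
  rw [sum_sum_erase_ite_and (g ∉ A ·)]
  by_cases hg : g = 1
  · subst hg
    simp [hone]
  · obtain ⟨i₀, hi₀, huniq⟩ := hpart g hg
    have : ({i | g ∉ A i} : Finset ι) = univ.erase i₀ := by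
      ext i
      simp only [mem_filter, mem_univ, true_and, mem_erase, and_true]
      exact ⟨fun h hi => h (hi ▸ hi₀), fun h hi => h (huniq i hi)⟩
    simp [this, hg, card_erase_of_mem, Nat.sub_sub]

end Partitions

theorem stmt_17_general {G : Type*} [Group G] [Fintype G] [DecidableEq G]
    (v m : ℕ) (hv : Fintype.card G = v)
    (H : Fin m → Subgroup G) (A : Fin m → Finset G)
    (hA : ∀ i, (A i : Set G) = (H i : Set G))
    (hcard : ∀ i j, i ≠ j → (A i).card * (A j).card = v)
    (hpart : ∀ g : G, g ≠ 1 → ∃! i, g ∈ H i) :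
    (∀ i j, i ≠ j → extDiffMul (A i) (A j) = (Finset.univ : Finset G).val) ∧
    (∀ i j, i ≠ j → Disjoint ((A i).erase 1) ((A j).erase 1)) ∧
    (∃ lam : ℕ,
      lam * (v - 1) = ∑ i, ∑ j ∈ Finset.univ.erase i, ((A i).card - 1) * ((A j).card - 1) ∧
      ∑ i, ∑ j ∈ Finset.univ.erase i, extDiffMul ((A i).erase 1) ((A j).erase 1)
        = lam • ((Finset.univ : Finset G).erase 1).val) := by
  subst hv
  have hmem (i : Fin m) (g : G) : g ∈ A i ↔ g ∈ H i := Set.ext_iff.mp (hA i) g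
  have hdisj (i j : Fin m) (hij : i ≠ j) : Disjoint (H i) (H j) :=
    Subgroup.disjoint_def.mpr fun {g} hgi hgj =>
      by_contra fun hg => hij ((hpart g hg).unique hgi hgj)
  have hsum : ∑ i, ∑ j ∈ univ.erase i, extDiffMul ((A i).erase 1) ((A j).erase 1)
      = ((m - 1) * (m - 2)) • (univ.erase 1 : Finset G).val := by
    rw [sum_congr rfl fun i _ => sum_congr rfl fun j hj =>
      extDiffMul_erase_one_eq_compl (hdisj i j (ne_of_mem_erase hj).symm) (hA i) (hA j)
        (hcard i j (ne_of_mem_erase hj).symm)]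
    simpa using sum_sum_erase_compl_union_val (fun i => (hmem i 1).mpr (one_mem _))
      fun g hg => by simpa only [hmem] using hpart g hg
  refine ⟨fun i j hij => extDiffMul_eq_univ (hdisj i j hij) (hA i).le (hA j).le (hcard i j hij),
    fun i j hij => ?_, (m - 1) * (m - 2), ?_, hsum⟩
  · refine disjoint_left.mpr fun g hgi hgj => (mem_erase.mp hgi).1 ?_
    exact Subgroup.disjoint_def.mp (hdisj i j hij) ((hmem i g).mp (mem_erase.mp hgi).2)
      ((hmem j g).mp (mem_erase.mp hgj).2)
  · simpa [card_extDiffMul, card_erase_of_mem, hmem] using (congrArg Multiset.card hsum).symm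

/-- let `H₁,…,H_m` (`m ≥ 2`) be subgroups of a finite group `G` of order
`v` with `|G| = |Hᵢ||Hⱼ|` for all `i ≠ j`, forming a partition of `G` (every non-identity
element lies in exactly one `Hᵢ`).  Then (i) for `i ≠ j` the multiset `Δ(Hᵢ,Hⱼ)` contains
each element of `G` exactly once (so the `Hᵢ` form a non-disjoint GPSEDF with
`λᵢⱼ = 1`); and (ii) the sets `Hᵢ∖{e}` are pairwise disjoint and form a classical GEDF:
`⋃_{i≠j} Δ(Hᵢ∖{e},Hⱼ∖{e}) = λ(G∖{e})` where `λ·(v-1) = ∑_{i≠j}(|Hᵢ|-1)(|Hⱼ|-1)`.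
(Here `Aᵢ` is the finset of elements of the subgroup `Hᵢ`.) -/
theorem stmt_17 {G : Type*} [Group G] [Fintype G] [DecidableEq G]
    (v m : ℕ) (hv : Fintype.card G = v) (hm : 2 ≤ m)
    (H : Fin m → Subgroup G) (A : Fin m → Finset G)
    (hA : ∀ i, (A i : Set G) = (H i : Set G))
    (hcard : ∀ i j, i ≠ j → (A i).card * (A j).card = v)
    (hpart : ∀ g : G, g ≠ 1 → ∃! i, g ∈ H i) :
    (∀ i j, i ≠ j → extDiffMul (A i) (A j) = (Finset.univ : Finset G).val) ∧
    (∀ i j, i ≠ j → Disjoint ((A i).erase 1) ((A j).erase 1)) ∧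
    (∃ lam : ℕ,
      lam * (v - 1) = ∑ i, ∑ j ∈ Finset.univ.erase i, ((A i).card - 1) * ((A j).card - 1) ∧
      ∑ i, ∑ j ∈ Finset.univ.erase i, extDiffMul ((A i).erase 1) ((A j).erase 1)
        = lam • ((Finset.univ : Finset G).erase 1).val) :=
  stmt_17_general v m hv H A hA hcard hpart
end

section
/- Let A = {A_1, …, A_m} be a non-disjoint (n_a, m, k_a, λ_a)-PSEDF in a group G_a and let B = {B_1, …, B_m} be a non-disjoint (n_b, m, k_b, λ_b)-PSEDF in a group G_b. Then L = {A_i × B_i : 1 ≤ i ≤ m} is a non-disjoint (n_a n_b, m, k_a k_b, λ_a λ_b)-PSEDF in the direct product G_a × G_b. -/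
namespace Multiset

variable {α β : Type*}

lemma product_nsmul (n : ℕ) (s : Multiset α) (t : Multiset β) :
    s ×ˢ (n • t) = n • (s ×ˢ t) := by
  induction n with
  | zero => simp only [zero_smul, product_zero]
  | succ n ih => rw [succ_nsmul, product_add, ih, succ_nsmul]

lemma nsmul_product (n : ℕ) (s : Multiset α) (t : Multiset β) :
    (n • s) ×ˢ t = n • (s ×ˢ t) := by
  induction n with
  | zero => simp only [zero_smul, zero_product]
  | succ n ih => rw [succ_nsmul, add_product, ih, succ_nsmul]

lemma nsmul_product_nsmul (m n : ℕ) (s : Multiset α) (t : Multiset β) :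
    (m • s) ×ˢ (n • t) = (m * n) • (s ×ˢ t) := by
  rw [nsmul_product, product_nsmul, smul_smul]

end Multiset

lemma extDiff_product {Ga Gb : Type*} [AddGroup Ga] [AddGroup Gb]
    (A C : Finset Ga) (B D : Finset Gb) :
    extDiff (A ×ˢ B) (C ×ˢ D) = extDiff A C ×ˢ extDiff B D := by
  rw [extDiff, extDiff, extDiff, Finset.product_val, Finset.product_val]
  simp only [SProd.sprod, Multiset.product, Multiset.bind_assoc,
    Multiset.bind_map, Multiset.map_bind, Multiset.map_map, Function.comp_def, Prod.mk_sub_mk]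
  exact Multiset.bind_congr fun a _ => Multiset.bind_bind _ _

theorem stmt_18_general {Ga Gb : Type*} [AddGroup Ga] [Fintype Ga]
    [AddGroup Gb] [Fintype Gb]
    (m ka kb lama lamb : ℕ)
    (A : Fin m → Finset Ga) (B : Fin m → Finset Gb)
    (hAcard : ∀ i, (A i).card = ka) (hBcard : ∀ i, (B i).card = kb)
    (hA : ∀ i j, i ≠ j → extDiff (A i) (A j) = lama • (Finset.univ : Finset Ga).val)
    (hB : ∀ i j, i ≠ j → extDiff (B i) (B j) = lamb • (Finset.univ : Finset Gb).val) :
    (∀ i, ((A i) ×ˢ (B i)).card = ka * kb) ∧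
    ∀ i j, i ≠ j → extDiff ((A i) ×ˢ (B i)) ((A j) ×ˢ (B j))
      = (lama * lamb) • (Finset.univ : Finset (Ga × Gb)).val := by
  refine ⟨fun i => by rw [Finset.card_product, hAcard, hBcard], fun i j hij => ?_⟩
  rw [extDiff_product, hA i j hij, hB i j hij, Multiset.nsmul_product_nsmul,
    ← Finset.univ_product_univ, Finset.product_val]

/-- if `{A₁,…,A_m}` is a non-disjoint `(n_a,m,k_a,λ_a)`-PSEDF in `G_a` and
`{B₁,…,B_m}` is a non-disjoint `(n_b,m,k_b,λ_b)`-PSEDF in `G_b`, then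
`{Aᵢ × Bᵢ : 1 ≤ i ≤ m}` is a non-disjoint `(n_a n_b, m, k_a k_b, λ_a λ_b)`-PSEDF in
`G_a × G_b`. -/
theorem stmt_18 {Ga Gb : Type*} [AddGroup Ga] [Fintype Ga] [DecidableEq Ga]
    [AddGroup Gb] [Fintype Gb] [DecidableEq Gb]
    (na nb m ka kb lama lamb : ℕ)
    (hna : Fintype.card Ga = na) (hnb : Fintype.card Gb = nb) (hm : 1 < m)
    (A : Fin m → Finset Ga) (B : Fin m → Finset Gb)
    (hAcard : ∀ i, (A i).card = ka) (hBcard : ∀ i, (B i).card = kb)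
    (hA : ∀ i j, i ≠ j → extDiff (A i) (A j) = lama • (Finset.univ : Finset Ga).val)
    (hB : ∀ i j, i ≠ j → extDiff (B i) (B j) = lamb • (Finset.univ : Finset Gb).val) :
    (∀ i, ((A i) ×ˢ (B i)).card = ka * kb) ∧
    ∀ i j, i ≠ j → extDiff ((A i) ×ˢ (B i)) ((A j) ×ˢ (B j))
      = (lama * lamb) • (Finset.univ : Finset (Ga × Gb)).val :=
  stmt_18_general m ka kb lama lamb A B hAcard hBcard hA hB
end

section
/- Let h_1, h_2, h_3, h_4 ∈ ℕ (all ≥ 1) and set v = h_1h_2h_3h_4 + 1. In ℤ_v, define A = ⋃_{i=0}^{h_3−1} { i·h_1h_2 + α : 0 ≤ α ≤ h_1−1 } and B = ⋃_{i=0}^{h_4−1} { i·h_1h_2h_3 + h_1h_2(h_3−1) + β·h_1 : 1 ≤ β ≤ h_2 }. Then A and B are disjoint subsets of ℤ_v with |A| = h_1h_3 and |B| = h_2h_4, and Δ(A,B) = ℤ_v ∖ {0} as multisets (each nonzero element of ℤ_v occurs exactly once in Δ(A,B), and 0 does not occur); likewise Δ(B,A) = ℤ_v ∖ {0}. In particular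 {A, B} is a classical (h_1h_2h_3h_4 + 1, 2; h_1h_3, h_2h_4; 1, 1)-GSEDF in ℤ_v. -/
open Set

section ExternalDifference

variable {G α β : Type*} [AddGroup G]

theorem extDiff_image [DecidableEq G] {s : Finset α} {t : Finset β} {f : α → G} {g : β → G}
    (hf : InjOn f s) (hg : InjOn g t) :
    extDiff (s.image f) (t.image g) = (s ×ˢ t).val.map fun p => f p.1 - g p.2 := by
  rw [extDiff, Finset.image_val_of_injOn hf, Finset.image_val_of_injOn hg, Finset.product_val]
  simp only [SProd.sprod, Multiset.product, Multiset.map_bind, Multiset.bind_map,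
    Multiset.map_map, Function.comp_def]

theorem map_neg_extDiff (A B : Finset G) : (extDiff A B).map Neg.neg = extDiff B A := by
  simp only [extDiff, Multiset.map_bind, Multiset.map_map, Function.comp_def, neg_sub]
  exact Multiset.bind_map_comm _ _

theorem disjoint_of_zero_notMem_extDiff [DecidableEq G] {A B : Finset G}
    (h : (0 : G) ∉ extDiff A B) : Disjoint A B :=
  Finset.disjoint_left.mpr fun {a} haA haB =>
    h (Multiset.mem_bind.mpr ⟨a, haA, Multiset.mem_map.mpr ⟨a, haB, sub_self a⟩⟩)

variable {s : Set α} {t : Set β} {f : α → G} {g : β → G}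

theorem injOn_left_of_injOn_sub (h : InjOn (fun p => f p.1 - g p.2) (s ×ˢ t))
    (ht : t.Nonempty) : InjOn f s := by
  obtain ⟨b, hb⟩ := ht
  intro x hx y hy hxy
  exact congrArg Prod.fst (h (mk_mem_prod hx hb) (mk_mem_prod hy hb) (by simp [hxy]))

theorem injOn_right_of_injOn_sub (h : InjOn (fun p => f p.1 - g p.2) (s ×ˢ t))
    (hs : s.Nonempty) : InjOn g t := by
  obtain ⟨a, ha⟩ := hs
  intro x hx y hy hxy
  exact congrArg Prod.snd (h (mk_mem_prod ha hx) (mk_mem_prod ha hy) (by simp [hxy]))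

end ExternalDifference

theorem Set.BijOn.finset_val_map {α β : Type*} [DecidableEq β] {s : Finset α} {t : Finset β}
    {f : α → β} (h : BijOn f s t) : s.val.map f = t.val := by
  rw [← Finset.image_val_of_injOn h.injOn,
    Finset.coe_injective (by rw [Finset.coe_image, h.image_eq] : (s.image f : Set β) = t)]

theorem map_neg_val_erase_zero {G : Type*} [AddGroup G] [Fintype G] [DecidableEq G] :
    ((Finset.univ : Finset G).erase 0).val.map Neg.neg = (Finset.univ.erase 0).val :=
  BijOn.finset_val_map <| InvOn.bijOn ⟨fun x _ => neg_neg x, fun x _ => neg_neg x⟩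
    (fun x hx => by simpa using hx) (fun x hx => by simpa using hx)

theorem bijOn_add_mul (a b : ℕ) :
    BijOn (fun p : ℕ × ℕ => p.1 + a * p.2) (Iio a ×ˢ Iio b) (Iio (a * b)) := by
  refine ⟨fun p ⟨h1, h2⟩ => ?_, fun p ⟨h1, h2⟩ q ⟨h1', h2'⟩ h => ?_, fun n hn => ?_⟩
  · rw [mem_Iio] at h1 h2 ⊢
    nlinarith
  · rw [mem_Iio] at h1 h1'
    have ha : 0 < a := by omega
    have hmod := congrArg (· % a) h
    have hdiv := congrArg (· / a) h
    simp only [Nat.add_mul_mod_self_left, Nat.mod_eq_of_lt h1, Nat.mod_eq_of_lt h1',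
      Nat.add_mul_div_left _ _ ha, Nat.div_eq_of_lt h1, Nat.div_eq_of_lt h1', zero_add]
      at hmod hdiv
    exact Prod.ext hmod hdiv
  · have ha : 0 < a := Nat.pos_of_mul_pos_right (hn.trans_le' (Nat.zero_le _))
    exact ⟨(n % a, n / a), ⟨Nat.mod_lt n ha, Nat.div_lt_of_lt_mul hn⟩, Nat.mod_add_div n a⟩

theorem bijOn_add_mul_add_mul_add_mul (a b c d : ℕ) :
    BijOn (fun x : ℕ × ℕ × ℕ × ℕ => x.1 + a * (x.2.1 + b * (x.2.2.1 + c * x.2.2.2)))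
      (Iio a ×ˢ Iio b ×ˢ Iio c ×ˢ Iio d) (Iio (a * b * c * d)) := by
  have := (bijOn_add_mul a _).comp <| (bijOn_id (Iio a)).prodMap <|
    (bijOn_add_mul b _).comp <| (bijOn_id (Iio b)).prodMap (bijOn_add_mul c d)
  rwa [mul_assoc, mul_assoc]

theorem bijOn_natCast_succ (m : ℕ) :
    BijOn (fun n : ℕ => ((n + 1 : ℕ) : ZMod (m + 1))) (Iio m) {0}ᶜ := by
  refine ⟨fun n hn => ?_, fun n hn n' hn' h => ?_, fun x hx => ?_⟩
  · rw [mem_Iio] at hn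
    rw [mem_compl_singleton_iff, ne_eq, ZMod.natCast_eq_zero_iff]
    exact Nat.not_dvd_of_pos_of_lt n.succ_pos (by omega)
  · rw [mem_Iio] at hn hn'
    rw [ZMod.natCast_eq_natCast_iff', Nat.mod_eq_of_lt (by omega),
      Nat.mod_eq_of_lt (by omega)] at h
    omega
  · have hval : x.val ≠ 0 := (ZMod.val_ne_zero x).mpr hx
    refine ⟨x.val - 1, mem_Iio.mpr (by have := ZMod.val_lt x; omega), ?_⟩
    dsimp only
    rw [Nat.sub_add_cancel (Nat.one_le_iff_ne_zero.mpr hval), ZMod.natCast_zmod_val]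

section Construction

variable (h₁ h₂ h₃ h₄ : ℕ)

def elemA (p : ℕ × ℕ) : ℕ := p.1 * (h₁ * h₂) + p.2

def elemB (p : ℕ × ℕ) : ℕ := p.1 * (h₁ * h₂ * h₃) + h₁ * h₂ * (h₃ - 1) + (p.2 + 1) * h₁

theorem natCast_elemB_sub_natCast_elemA {R : Type*} [AddGroupWithOne R] {i α : ℕ}
    (hi : i < h₃) (hα : α < h₁) (j β : ℕ) :
    (elemB h₁ h₂ h₃ (j, β) : R) - (elemA h₁ h₂ (i, α) : R) =
      ((h₁ - 1 - α + h₁ * (β + h₂ * (h₃ - 1 - i + h₃ * j)) + 1 : ℕ) : R) := by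
  rw [sub_eq_iff_eq_add, ← Nat.cast_add]
  congr 1
  zify [elemA, elemB, show α ≤ h₁ - 1 by omega, show i ≤ h₃ - 1 by omega,
    show 1 ≤ h₁ by omega, show 1 ≤ h₃ by omega]
  ring

theorem bijOn_differenceDigits :
    BijOn (fun x : (ℕ × ℕ) × (ℕ × ℕ) => (h₁ - 1 - x.2.2, x.1.2, h₃ - 1 - x.2.1, x.1.1))
      ((Iio h₄ ×ˢ Iio h₂) ×ˢ (Iio h₃ ×ˢ Iio h₁)) (Iio h₁ ×ˢ Iio h₂ ×ˢ Iio h₃ ×ˢ Iio h₄) := by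
  refine InvOn.bijOn (f' := fun y => ((y.2.2.2, y.2.1), (h₃ - 1 - y.2.2.1, h₁ - 1 - y.1)))
    ⟨?_, ?_⟩ ?_ ?_ <;>
  · intro z hz
    simp only [mem_prod, mem_Iio, Prod.ext_iff, true_and, and_true] at hz ⊢
    omega

theorem bijOn_elemB_sub_elemA :
    BijOn (fun x : (ℕ × ℕ) × (ℕ × ℕ) =>
        (elemB h₁ h₂ h₃ x.1 : ZMod (h₁ * h₂ * h₃ * h₄ + 1)) - (elemA h₁ h₂ x.2 : ZMod _))
      ((Iio h₄ ×ˢ Iio h₂) ×ˢ (Iio h₃ ×ˢ Iio h₁)) {0}ᶜ :=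
  ((bijOn_natCast_succ _).comp ((bijOn_add_mul_add_mul_add_mul h₁ h₂ h₃ h₄).comp
    (bijOn_differenceDigits h₁ h₂ h₃ h₄))).congr fun x hx =>
      (natCast_elemB_sub_natCast_elemA h₁ h₂ h₃ hx.2.1 hx.2.2 x.1.1 x.1.2).symm

end Construction

/-- let `h₁,h₂,h₃,h₄ ≥ 1` and `v = h₁h₂h₃h₄ + 1`.  In `ℤ_v`, the sets
`A = ⋃_{i<h₃} {i·h₁h₂ + α : 0 ≤ α ≤ h₁-1}` and
`B = ⋃_{i<h₄} {i·h₁h₂h₃ + h₁h₂(h₃-1) + β·h₁ : 1 ≤ β ≤ h₂}` are disjoint with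
`|A| = h₁h₃`, `|B| = h₂h₄`, and `Δ(A,B) = Δ(B,A) = ℤ_v∖{0}` as multisets (each nonzero
element occurring exactly once, and `0` not occurring); so `{A,B}` is a classical
`(h₁h₂h₃h₄+1, 2; h₁h₃, h₂h₄; 1, 1)`-GSEDF in `ℤ_v`. -/
theorem stmt_19 (h₁ h₂ h₃ h₄ : ℕ) (hh₁ : 1 ≤ h₁) (hh₂ : 1 ≤ h₂)
    (hh₃ : 1 ≤ h₃) (hh₄ : 1 ≤ h₄) :
    let v := h₁ * h₂ * h₃ * h₄ + 1
    let A : Finset (ZMod v) :=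
      ((Finset.range h₃) ×ˢ (Finset.range h₁)).image
        (fun p : ℕ × ℕ => ((p.1 * (h₁ * h₂) + p.2 : ℕ) : ZMod v))
    let B : Finset (ZMod v) :=
      ((Finset.range h₄) ×ˢ (Finset.range h₂)).image
        (fun p : ℕ × ℕ =>
          ((p.1 * (h₁ * h₂ * h₃) + h₁ * h₂ * (h₃ - 1) + (p.2 + 1) * h₁ : ℕ) : ZMod v))
    Disjoint A B ∧ A.card = h₁ * h₃ ∧ B.card = h₂ * h₄ ∧
      extDiff A B = ((Finset.univ : Finset (ZMod v)).erase 0).val ∧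
      extDiff B A = ((Finset.univ : Finset (ZMod v)).erase 0).val := by
  intro v A B
  have hsub := bijOn_elemB_sub_elemA h₁ h₂ h₃ h₄
  have hinjA := injOn_right_of_injOn_sub (f := fun q => (elemB h₁ h₂ h₃ q : ZMod v))
    (g := fun p => (elemA h₁ h₂ p : ZMod v)) hsub.injOn ⟨(0, 0), by simp; omega⟩
  have hinjB := injOn_left_of_injOn_sub (f := fun q => (elemB h₁ h₂ h₃ q : ZMod v))
    (g := fun p => (elemA h₁ h₂ p : ZMod v)) hsub.injOn ⟨(0, 0), by simp; omega⟩
  simp only [← Finset.coe_range, ← Finset.coe_product] at hinjA hinjB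
  have hBA : extDiff B A = ((Finset.univ : Finset (ZMod v)).erase 0).val :=
    (extDiff_image hinjB hinjA).trans
      (BijOn.finset_val_map (by simpa [compl_eq_univ_sdiff] using hsub))
  have hAB : extDiff A B = ((Finset.univ : Finset (ZMod v)).erase 0).val := by
    rw [← map_neg_extDiff, hBA, map_neg_val_erase_zero]
  refine ⟨disjoint_of_zero_notMem_extDiff ?_, ?_, ?_, hAB, hBA⟩
  · rw [hAB, Finset.mem_val]
    exact Finset.notMem_erase 0 _
  · exact (Finset.card_image_of_injOn hinjA).trans (by simp [mul_comm])
  · exact (Finset.card_image_of_injOn hinjB).trans (by simp [mul_comm])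
end
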